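/- Let f : ℝ³ → ℂ be differentiable at p ∈ ℝ³ with p ≠ 0, let j ∈ {1,2,3}, and define the one-particle Newton–Wigner–Pryce operator in momentum space by (X_j g)(p) = -i·(p_j/(2‖p‖²)·g(p) + ∂_j g(p)). Then ‖p‖·(X_j f)(p) - (X_j (‖·‖·f))(p) = i·(p_j/‖p‖)·f(p), where ‖·‖·f denotes the function q ↦ ‖q‖ f(q); i.e., the commutator [P₀, X_j] of multiplication by the massless energy ω_p = ‖p‖ with the Newton–Wigner–Pryce operator equals i times multiplication by the velocity component p_j/‖p‖. -/

import Mathlib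

/-- The one-particle Newton–Wigner–Pryce operator in momentum space:
`(X_j g)(p) = -i (p_j/(2‖p‖²) g(p) + ∂_j g(p))`. -/
noncomputable def nwpOp (j : Fin 3) (g : EuclideanSpace ℝ (Fin 3) → ℂ)
    (p : EuclideanSpace ℝ (Fin 3)) : ℂ :=
  -Complex.I * (((p j / (2 * ‖p‖ ^ 2) : ℝ) : ℂ) * g p +
    fderiv ℝ g p (EuclideanSpace.single j 1))

lemma hasFDerivAt_norm' (p : EuclideanSpace ℝ (Fin 3)) (hp : p ≠ 0) :
    HasFDerivAt (fun q : EuclideanSpace ℝ (Fin 3) => ‖q‖) (‖p‖⁻¹ • innerSL ℝ p) p := by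
  have h1 : HasFDerivAt (fun q : EuclideanSpace ℝ (Fin 3) => ‖q‖ ^ 2)
      (2 • innerSL ℝ p) p := by
    simpa using (hasFDerivAt_id p).norm_sq
  have hs : HasDerivAt Real.sqrt (1 / (2 * Real.sqrt (‖p‖ ^ 2))) (‖p‖ ^ 2) :=
    Real.hasDerivAt_sqrt (pow_ne_zero 2 (norm_ne_zero_iff.mpr hp))
  have := (hs.comp_hasFDerivAt p h1)
  have heq : Real.sqrt ∘ (fun q : EuclideanSpace ℝ (Fin 3) => ‖q‖ ^ 2)
      = fun q => ‖q‖ := by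
    funext q; simp [Real.sqrt_sq (norm_nonneg q)]
  rw [heq] at this
  refine this.congr_fderiv ?_
  ext v
  have : Real.sqrt (‖p‖ ^ 2) = ‖p‖ := Real.sqrt_sq (norm_nonneg p)
  simp only [ContinuousLinearMap.coe_smul', Pi.smul_apply, this,
    ContinuousLinearMap.smul_apply, smul_eq_mul]
  ring

/-- The Heisenberg equation of motion `[P₀, X_j] = i V_j`:
`‖p‖ (X_j f)(p) - (X_j (‖·‖ f))(p) = i (p_j/‖p‖) f(p)`. -/
theorem stmt14 (f : EuclideanSpace ℝ (Fin 3) → ℂ) (p : EuclideanSpace ℝ (Fin 3))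
    (hp : p ≠ 0) (hf : DifferentiableAt ℝ f p) (j : Fin 3) :
    (‖p‖ : ℂ) * nwpOp j f p - nwpOp j (fun q => (‖q‖ : ℂ) * f q) p
      = Complex.I * ((p j / ‖p‖ : ℝ) : ℂ) * f p := by
  have hn := hasFDerivAt_norm' p hp
  have hnc : HasFDerivAt (fun q : EuclideanSpace ℝ (Fin 3) => (‖q‖ : ℂ))
      (Complex.ofRealCLM.comp (‖p‖⁻¹ • innerSL ℝ p)) p :=
    Complex.ofRealCLM.hasFDerivAt.comp p hn
  have hg := hnc.mul hf.hasFDerivAt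
  have hfd : fderiv ℝ (fun q => (‖q‖ : ℂ) * f q) p = _ := hg.fderiv
  have hinner : (innerSL ℝ p) (EuclideanSpace.single j 1) = p j := by
    simp [EuclideanSpace.inner_single_right]
  unfold nwpOp
  rw [hfd]
  simp only [ContinuousLinearMap.add_apply, ContinuousLinearMap.smul_apply,
    ContinuousLinearMap.coe_comp', Function.comp_apply,
    ContinuousLinearMap.coe_smul', Pi.smul_apply, hinner, Complex.ofRealCLM_apply, smul_eq_mul]
  have hpn : (‖p‖ : ℝ) ≠ 0 := norm_ne_zero_iff.mpr hp
  have hpc : (‖p‖ : ℂ) ≠ 0 := by exact_mod_cast hpn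
  push_cast
  field_simp
  ring
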